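/- Let X and Y be Banach spaces and let (Pₙ) be an unconditional expansion of the identity of X, i.e., a sequence of bounded operators on X such that x = Σₙ Pₙ(x) with unconditional convergence in X, for every x ∈ X. If X ⊗̂π Y contains no complemented subspace isomorphic to ℓ1, then for every bounded operator T : X → Y* the series Σₙ T ∘ Pₙ converges unconditionally in the operator norm of L(X, Y*) with sum T. -/

import Mathlib

open Filter Topology NormedSpace
open scoped ENNReal NNReal

/-- `Z`, together with the continuous bilinear map `m`, is (a realization of) the projective
tensor product `X ⊗̂π Y`: the span of elementary tensors is dense, and every continuous bilinear
map into a Banach space lifts to a continuous linear map on `Z` with the same norm. -/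
structure IsProjTensorProduct (X Y Z : Type*) [NormedAddCommGroup X] [NormedSpace ℝ X]
    [NormedAddCommGroup Y] [NormedSpace ℝ Y] [NormedAddCommGroup Z] [NormedSpace ℝ Z]
    (m : X →L[ℝ] Y →L[ℝ] Z) : Prop where
  dense_span : Dense (Submodule.span ℝ {z : Z | ∃ x y, m x y = z} : Set Z)
  lift : ∀ (W : Type) [NormedAddCommGroup W] [NormedSpace ℝ W] [CompleteSpace W]
    (B : X →L[ℝ] Y →L[ℝ] W), ∃ T : Z →L[ℝ] W, ‖T‖ = ‖B‖ ∧ ∀ x y, T (m x y) = B x y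

/-- A set is relatively weakly compact if its closure in the weak topology is weakly compact. -/
def RelWeakCompact (X : Type*) [SeminormedAddCommGroup X] [NormedSpace ℝ X] (A : Set X) : Prop :=
  IsCompact (closure ((toWeakSpace ℝ X) '' A))

/-- A set is relatively norm compact if its norm closure is compact. -/
def RelNormCompact (X : Type*) [SeminormedAddCommGroup X] [NormedSpace ℝ X] (A : Set X) : Prop :=
  IsCompact (closure A)

/-- A sequence is weakly Cauchy if every continuous functional sends it to a convergent sequence. -/
def WeaklyCauchySeq {X : Type*} [SeminormedAddCommGroup X] [NormedSpace ℝ X] (x : ℕ → X) : Prop :=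
  ∀ f : X →L[ℝ] ℝ, ∃ l : ℝ, Tendsto (fun n => f (x n)) atTop (nhds l)

/-- A sequence is weakly null if it converges to `0` in the weak topology. -/
def WeaklyNullSeq {X : Type*} [SeminormedAddCommGroup X] [NormedSpace ℝ X] (x : ℕ → X) : Prop :=
  ∀ f : X →L[ℝ] ℝ, Tendsto (fun n => f (x n)) atTop (nhds 0)

/-- A set is weakly precompact if every sequence in it has a weakly Cauchy subsequence. -/
def WeaklyPrecompact {X : Type*} [SeminormedAddCommGroup X] [NormedSpace ℝ X] (A : Set X) : Prop :=
  ∀ x : ℕ → X, (∀ n, x n ∈ A) → ∃ φ : ℕ → ℕ, StrictMono φ ∧ WeaklyCauchySeq (x ∘ φ)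

/-- A (weakly) compact operator maps the closed unit ball to a relatively (weakly) compact set. -/
def WeaklyCompactOp {X Y : Type*} [SeminormedAddCommGroup X] [NormedSpace ℝ X]
    [SeminormedAddCommGroup Y] [NormedSpace ℝ Y] (T : X →L[ℝ] Y) : Prop :=
  RelWeakCompact Y (T '' Metric.closedBall 0 1)

/-- `E` contains a subspace isomorphic to `ℓ1`. -/
def ContainsL1 (E : Type*) [NormedAddCommGroup E] [NormedSpace ℝ E] : Prop :=
  ∃ f : lp (fun _ : ℕ => ℝ) 1 →L[ℝ] E, ∃ c : ℝ, 0 < c ∧ ∀ v, c * ‖v‖ ≤ ‖f v‖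

/-- `E` contains a complemented subspace isomorphic to `ℓ1`. -/
def ContainsComplementedL1 (E : Type*) [NormedAddCommGroup E] [NormedSpace ℝ E] : Prop :=
  ∃ (f : lp (fun _ : ℕ => ℝ) 1 →L[ℝ] E) (g : E →L[ℝ] lp (fun _ : ℕ => ℝ) 1),
    g.comp f = ContinuousLinearMap.id ℝ (lp (fun _ : ℕ => ℝ) 1)

/-!
Identify the dual of `Z = X ⊗̂π Y` with `L(X, Y*)`, so that the operators `T ∘ Pₙ` become
functionals `hₙ` on `Z`. By Banach–Steinhaus the block sums `∑_{n ∈ J} hₙ` are uniformly bounded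
by some `K`, and `∑ₙ hₙ (x ⊗ y) = T x y` converges on elementary tensors, hence `∑ₙ hₙ z`
converges for every `z`. If `∑ₙ hₙ` did not converge in norm, there would be far-out disjoint
blocks `J_k` with `‖∑_{n ∈ J_k} hₙ‖ ≥ ε`, normed by unit vectors `z_k`. Pointwise convergence
makes later blocks small on earlier vectors, and Bolzano–Weierstrass, applied to the values of
finitely many earlier blocks, yields differences `z_q - z_p` on which the earlier blocks are
small. Such an almost biorthogonal system, together with `∑_k |(∑_{n ∈ J_k} hₙ) z| ≤ 2 K ‖z‖`
for disjoint blocks, spans a complemented copy of `ℓ1` in `Z`.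
-/

theorem exists_seq_of_forall_finset_exists_nat {β : Type*} (P : ℕ → β → Prop)
    (R : ℕ → β → β → Prop) (h : ∀ (n : ℕ) (s : Finset β), ∃ y, P n y ∧ ∀ x ∈ s, R n x y) :
    ∃ f : ℕ → β, (∀ n, P n (f n)) ∧ ∀ m n, m < n → R n (f m) (f n) := by
  classical
  choose g hg using h
  let history : ℕ → Finset β := fun n => Nat.rec ∅ (fun k s => insert (g k s) s) n
  have mem_history : ∀ m n, m < n → g m (history m) ∈ history n := by
    intro m n hmn
    induction n with
    | zero => omega
    | succ n ih =>
      show _ ∈ insert (g n (history n)) (history n)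
      rcases Nat.lt_succ_iff_lt_or_eq.1 hmn with hlt | rfl
      · exact Finset.mem_insert_of_mem (ih hlt)
      · exact Finset.mem_insert_self _ _
  exact ⟨fun n => g n (history n), fun n => (hg n _).1,
    fun m n hmn => (hg n _).2 _ (mem_history m n hmn)⟩

theorem Summable.exists_norm_finset_sum_le {ι E : Type*} [SeminormedAddCommGroup E] {f : ι → E}
    (hf : Summable f) : ∃ C, ∀ s : Finset ι, ‖∑ i ∈ s, f i‖ ≤ C := by
  classical
  obtain ⟨s₀, hs₀⟩ := cauchySeq_finset_iff_vanishing_norm.1 hf.hasSum.cauchySeq 1 one_pos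
  refine ⟨1 + ∑ i ∈ s₀, ‖f i‖, fun s => ?_⟩
  rw [← Finset.sum_filter_not_add_sum_filter s (· ∈ s₀)]
  have hfar := hs₀ (s.filter (· ∉ s₀))
    (Finset.disjoint_left.2 fun _ hi => (Finset.mem_filter.1 hi).2)
  have hnear : ‖∑ i ∈ s with i ∈ s₀, f i‖ ≤ ∑ i ∈ s₀, ‖f i‖ :=
    (norm_sum_le _ _).trans (Finset.sum_le_sum_of_subset_of_nonneg
      (fun i hi => (Finset.mem_filter.1 hi).2) fun _ _ _ => norm_nonneg _)
  linarith [norm_add_le (∑ i ∈ s with i ∉ s₀, f i) (∑ i ∈ s with i ∈ s₀, f i)]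

theorem Finset.sum_abs_le_two_mul {ι : Type*} (s : Finset ι) (a : ι → ℝ) {c : ℝ}
    (h : ∀ t ⊆ s, |∑ i ∈ t, a i| ≤ c) : ∑ i ∈ s, |a i| ≤ 2 * c := by
  classical
  have hpos := h (s.filter fun i => 0 ≤ a i) (Finset.filter_subset _ _)
  have hneg := h (s.filter fun i => ¬ 0 ≤ a i) (Finset.filter_subset _ _)
  rw [← Finset.sum_filter_add_sum_filter_not s (fun i => 0 ≤ a i)]
  rw [Finset.sum_congr rfl fun i hi => abs_of_nonneg (Finset.mem_filter.1 hi).2,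
    Finset.sum_congr rfl fun i hi => abs_of_neg (not_le.1 (Finset.mem_filter.1 hi).2),
    Finset.sum_neg_distrib]
  linarith [le_abs_self (∑ i ∈ s with 0 ≤ a i, a i), neg_abs_le (∑ i ∈ s with ¬ 0 ≤ a i, a i)]

theorem sum_le_three_mul_of_le_div_of_le_geometric {s : Finset ℕ} {k : ℕ} (hk : k ∉ s)
    (b : ℕ → ℝ) {c : ℝ} (hc : 0 ≤ c) (hlt : ∀ l < k, b l ≤ c / (k + 1))
    (hgt : ∀ l, k < l → b l ≤ c * (1 / 2) ^ l) : ∑ l ∈ s, b l ≤ 3 * c := by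
  rw [← Finset.sum_filter_add_sum_filter_not s (· < k)]
  have hbefore : ∑ l ∈ s with l < k, b l ≤ c := by
    have hcard : ((s.filter (· < k)).card : ℝ) ≤ k := by
      exact_mod_cast (Finset.card_le_card fun l hl => Finset.mem_range.2
        (Finset.mem_filter.1 hl).2).trans (Finset.card_range k).le
    calc ∑ l ∈ s with l < k, b l ≤ (s.filter (· < k)).card * (c / (k + 1)) := by
          simpa using Finset.sum_le_card_nsmul _ _ _ fun l hl => hlt l (Finset.mem_filter.1 hl).2
      _ ≤ (k + 1) * (c / (k + 1)) := by gcongr; linarith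
      _ = c := by field_simp
  have hafter : ∑ l ∈ s with ¬ l < k, b l ≤ 2 * c := by
    calc ∑ l ∈ s with ¬ l < k, b l ≤ ∑ l ∈ s with ¬ l < k, c * (1 / 2) ^ l := by
          refine Finset.sum_le_sum fun l hl => hgt l ?_
          obtain ⟨hls, hlk⟩ := Finset.mem_filter.1 hl
          exact lt_of_le_of_ne (not_lt.1 hlk) fun hkl => hk (hkl ▸ hls)
      _ = c * ∑ l ∈ s with ¬ l < k, (1 / 2 : ℝ) ^ l := by rw [Finset.mul_sum]
      _ ≤ c * 2 := by
          gcongr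
          exact (summable_geometric_two.sum_le_tsum _ fun _ _ => by positivity).trans_eq
            tsum_geometric_two
      _ = 2 * c := mul_comm _ _
  linarith

theorem exists_le_lt_dist_lt_of_isBounded_range {E : Type*} [PseudoMetricSpace E] [ProperSpace E]
    {u : ℕ → E} (hu : Bornology.IsBounded (Set.range u)) {η : ℝ} (hη : 0 < η) (N : ℕ) :
    ∃ p q, N ≤ p ∧ p < q ∧ dist (u p) (u q) < η := by
  obtain ⟨a, -, φ, hφ, hlim⟩ := tendsto_subseq_of_bounded hu (fun n => Set.mem_range_self n)
  obtain ⟨M, hM⟩ := Metric.cauchySeq_iff.1 hlim.cauchySeq η hη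
  refine ⟨φ (max M N), φ (max M N + 1), (le_max_right M N).trans (hφ.id_le _),
    hφ (Nat.lt_succ_self _), hM _ (le_max_left _ _) _ ?_⟩
  exact (le_max_left _ _).trans (Nat.le_succ _)

theorem exists_pairs_forall_lt_abs_sub_lt (a : ℕ → ℕ → ℝ) {K : ℝ} (ha : ∀ l i, |a l i| ≤ K)
    {η : ℕ → ℝ} (hη : ∀ k, 0 < η k) :
    ∃ p q : ℕ → ℕ, (∀ k, p k < q k) ∧
      ∀ m k, m < k → q m < p k ∧ |a (q m) (q k) - a (q m) (p k)| < η k := by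
  have hK : 0 ≤ K := (abs_nonneg _).trans (ha 0 0)
  obtain ⟨pq, hlt, hrel⟩ := exists_seq_of_forall_finset_exists_nat (β := ℕ × ℕ)
    (fun _ y => y.1 < y.2) (fun n x y => x.2 < y.1 ∧ |a x.2 y.2 - a x.2 y.1| < η n) fun n s => by
      let v : ℕ → s → ℝ := fun i x => a x.1.2 i
      have hv : Bornology.IsBounded (Set.range v) := by
        refine (Metric.isBounded_iff_subset_closedBall 0).2 ⟨K, ?_⟩
        rintro _ ⟨i, rfl⟩
        rw [mem_closedBall_zero_iff]
        exact pi_norm_le_iff_of_nonneg hK |>.2 fun x => ha _ _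
      obtain ⟨p, q, hNp, hpq, hdist⟩ :=
        exists_le_lt_dist_lt_of_isBounded_range hv (hη n) (s.sup Prod.snd + 1)
      refine ⟨(p, q), hpq, fun x hx => ⟨?_, ?_⟩⟩
      · exact (Nat.lt_succ_of_le (Finset.le_sup (f := Prod.snd) hx)).trans_le hNp
      · rw [abs_sub_comm, ← Real.dist_eq]
        exact (dist_le_pi_dist (v p) (v q) ⟨x, hx⟩).trans_lt hdist
  exact ⟨fun k => (pq k).1, fun k => (pq k).2, hlt, hrel⟩

theorem ContinuousLinearMap.exists_norm_le_one_lt_apply {E : Type*} [NormedAddCommGroup E]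
    [NormedSpace ℝ E] (φ : E →L[ℝ] ℝ) {r : ℝ} (hr : r < ‖φ‖) : ∃ z, ‖z‖ ≤ 1 ∧ r < φ z := by
  obtain ⟨z, hz, hrz⟩ := φ.exists_lt_apply_of_lt_opNorm hr
  rcases le_total 0 (φ z) with hpos | hneg
  · exact ⟨z, hz.le, by rwa [Real.norm_of_nonneg hpos] at hrz⟩
  · exact ⟨-z, by simpa using hz.le, by rwa [Real.norm_of_nonpos hneg, ← map_neg] at hrz⟩

theorem exists_norm_finset_sum_le_of_summable_apply {𝕜 E F : Type*} [NontriviallyNormedField 𝕜]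
    [NormedAddCommGroup E] [NormedSpace 𝕜 E] [CompleteSpace E] [NormedAddCommGroup F]
    [NormedSpace 𝕜 F] (h : ℕ → E →L[𝕜] F)
    (hh : ∀ z, Summable fun n => h n z) : ∃ K, ∀ s : Finset ℕ, ‖∑ n ∈ s, h n‖ ≤ K :=
  banach_steinhaus fun z => by
    simpa using (hh z).exists_norm_finset_sum_le

section SummableApply

variable {𝕜 E F : Type*} [NontriviallyNormedField 𝕜] [SeminormedAddCommGroup E]
  [NormedSpace 𝕜 E] [NormedAddCommGroup F] [NormedSpace 𝕜 F] [CompleteSpace F]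

theorem isClosed_setOf_summable_apply (h : ℕ → E →L[𝕜] F) {K : ℝ}
    (hK : ∀ s : Finset ℕ, ‖∑ n ∈ s, h n‖ ≤ K) : IsClosed {z | Summable fun n => h n z} := by
  have hK0 : 0 ≤ K := (norm_nonneg _).trans (hK ∅)
  refine isClosed_of_closure_subset fun z hz => summable_iff_vanishing_norm.2 fun ε hε => ?_
  obtain ⟨w, hw, hzw⟩ := Metric.mem_closure_iff.1 hz (ε / (2 * (K + 1))) (by positivity)
  obtain ⟨s, hs⟩ := summable_iff_vanishing_norm.1 hw (ε / 2) (by positivity)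
  refine ⟨s, fun t ht => ?_⟩
  have hclose : K * ‖z - w‖ < ε / 2 := by
    rw [← dist_eq_norm]
    calc K * dist z w ≤ (K + 1) * dist z w := by gcongr; linarith
      _ < (K + 1) * (ε / (2 * (K + 1))) := by gcongr
      _ = ε / 2 := by field_simp
  have hsplit : ∑ n ∈ t, h n z = ∑ n ∈ t, h n w + (∑ n ∈ t, h n) (z - w) := by
    simp [Finset.sum_sub_distrib]
  calc ‖∑ n ∈ t, h n z‖ ≤ ‖∑ n ∈ t, h n w‖ + ‖∑ n ∈ t, h n‖ * ‖z - w‖ := by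
        rw [hsplit]
        exact (norm_add_le _ _).trans (by gcongr; exact ContinuousLinearMap.le_opNorm _ _)
    _ < ε / 2 + K * ‖z - w‖ :=
        add_lt_add_of_lt_of_le (hs t ht) (mul_le_mul_of_nonneg_right (hK t) (norm_nonneg _))
    _ < ε := by linarith

theorem summable_apply_of_dense_span (h : ℕ → E →L[𝕜] F) {K : ℝ}
    (hK : ∀ s : Finset ℕ, ‖∑ n ∈ s, h n‖ ≤ K) {S : Set E}
    (hS : Dense (Submodule.span 𝕜 S : Set E)) (hSum : ∀ z ∈ S, Summable fun n => h n z)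
    (z : E) : Summable fun n => h n z := by
  let V : Submodule 𝕜 E :=
    { carrier := {z | Summable fun n => h n z}
      add_mem' := fun ha hb => by simpa using ha.add hb
      zero_mem' := by simp
      smul_mem' := fun c _ hz => by simpa using hz.const_smul c }
  have hspan : (Submodule.span 𝕜 S : Set E) ⊆ V := Submodule.span_le.2 hSum
  exact closure_minimal hspan (isClosed_setOf_summable_apply h hK) (hS z)

end SummableApply

local notation "ℓ1" => lp (fun _ : ℕ => ℝ) 1

theorem lp.hasSum_norm_one (a : ℓ1) : HasSum (fun k => ‖a k‖) ‖a‖ := by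
  simpa using lp.hasSum_norm (p := 1) (by norm_num) a

theorem lp.norm_le_of_forall_sum_norm_le (a : ℓ1) {c : ℝ}
    (h : ∀ s : Finset ℕ, ∑ k ∈ s, ‖a k‖ ≤ c) : ‖a‖ ≤ c :=
  lp.norm_le_of_forall_sum_le (p := 1) (by norm_num) (by simpa using h ∅) (by simpa using h)

theorem lp.opNorm_le_of_forall_single {F : Type*} [NormedAddCommGroup F] [NormedSpace ℝ F]
    (A : ℓ1 →L[ℝ] F) {c : ℝ} (hc : 0 ≤ c) (h : ∀ k, ‖A (lp.single 1 k 1)‖ ≤ c) : ‖A‖ ≤ c := by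
  refine A.opNorm_le_bound hc fun a => ?_
  have hA : HasSum (fun k => a k • A (lp.single 1 k 1)) (A a) := by
    have := (lp.hasSum_single (p := 1) (by norm_num) a).mapL A
    simpa [← map_smul, ← lp.single_smul] using this
  refine hA.norm_le_of_bounded ((lp.hasSum_norm_one a).mul_left c) fun k => ?_
  rw [norm_smul, mul_comm]
  exact mul_le_mul_of_nonneg_right (h k) (norm_nonneg _)

theorem exists_l1_synthesis {E : Type*} [NormedAddCommGroup E] [NormedSpace ℝ E]
    [CompleteSpace E] (u : ℕ → E) {B : ℝ} (hu : ∀ k, ‖u k‖ ≤ B) :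
    ∃ f : ℓ1 →L[ℝ] E, ∀ a : ℓ1, HasSum (fun k => a k • u k) (f a) := by
  have hle : ∀ (a : ℓ1) k, ‖a k • u k‖ ≤ B * ‖a k‖ := fun a k => by
    rw [norm_smul, mul_comm]; exact mul_le_mul_of_nonneg_right (hu k) (norm_nonneg (a k))
  have hsum : ∀ a : ℓ1, Summable fun k => a k • u k := fun a =>
    Summable.of_norm_bounded ((lp.hasSum_norm_one a).summable.mul_left B) (hle a)
  let f : ℓ1 →ₗ[ℝ] E :=
    { toFun := fun a => ∑' k, a k • u k
      map_add' := fun a b => by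
        simp only [lp.coeFn_add, Pi.add_apply, add_smul]
        exact (hsum a).tsum_add (hsum b)
      map_smul' := fun r a => by
        simp only [lp.coeFn_smul, Pi.smul_apply, smul_assoc, RingHom.id_apply]
        exact (hsum a).tsum_const_smul r }
  refine ⟨f.mkContinuous B fun a => ?_, fun a => (hsum a).hasSum⟩
  exact (hsum a).hasSum.norm_le_of_bounded ((lp.hasSum_norm_one a).mul_left B) (hle a)

theorem exists_l1_analysis {E : Type*} [NormedAddCommGroup E] [NormedSpace ℝ E]
    (e : ℕ → E →L[ℝ] ℝ) {C : ℝ} (he : ∀ z (s : Finset ℕ), ∑ k ∈ s, |e k z| ≤ C * ‖z‖) :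
    ∃ g : E →L[ℝ] ℓ1, ∀ z k, g z k = e k z := by
  let g : E →ₗ[ℝ] ℓ1 :=
    { toFun := fun z => ⟨fun k => e k z, memℓp_gen' (C := C * ‖z‖) (by simpa using he z)⟩
      map_add' := fun z w => lp.ext <| funext fun k => (e k).map_add z w
      map_smul' := fun r z => lp.ext <| funext fun k => (e k).map_smul r z }
  exact ⟨g.mkContinuous C fun z => lp.norm_le_of_forall_sum_norm_le _ (he z),
    fun _ _ => rfl⟩

theorem containsComplementedL1_of_norm_sub_lt_one {E : Type*} [NormedAddCommGroup E]
    [NormedSpace ℝ E] (f : ℓ1 →L[ℝ] E) (g : E →L[ℝ] ℓ1) (h : ‖1 - g ∘L f‖ < 1) :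
    ContainsComplementedL1 E := by
  let U := Units.oneSub _ h
  have hU : (U : ℓ1 →L[ℝ] ℓ1) = g ∘L f := by simp [U]
  refine ⟨f, (↑U⁻¹ : ℓ1 →L[ℝ] ℓ1) ∘L g, ?_⟩
  rw [ContinuousLinearMap.comp_assoc, ← hU, ← ContinuousLinearMap.mul_def, Units.inv_mul]
  rfl

theorem containsComplementedL1_of_biorthogonal {E : Type*} [NormedAddCommGroup E]
    [NormedSpace ℝ E] [CompleteSpace E] (e : ℕ → E →L[ℝ] ℝ) (u : ℕ → E) {B C θ : ℝ}
    (hu : ∀ k, ‖u k‖ ≤ B) (he : ∀ z (s : Finset ℕ), ∑ k ∈ s, |e k z| ≤ C * ‖z‖)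
    (hdiag : ∀ k, e k (u k) = 1) (hθ : θ < 1)
    (hoff : ∀ k (s : Finset ℕ), k ∉ s → ∑ l ∈ s, |e l (u k)| ≤ θ) :
    ContainsComplementedL1 E := by
  classical
  obtain ⟨f, hf⟩ := exists_l1_synthesis u hu
  obtain ⟨g, hg⟩ := exists_l1_analysis e he
  have hf_single : ∀ k, f (lp.single 1 k 1) = u k := fun k =>
    (hf _).unique <| by
      simpa using hasSum_single (f := fun j => (lp.single 1 k 1 : ℓ1) j • u j) k
        fun j hj => by simp [hj]
  refine containsComplementedL1_of_norm_sub_lt_one f g (lt_of_le_of_lt ?_ hθ)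
  refine lp.opNorm_le_of_forall_single _ (by simpa using hoff 0 ∅ (by simp)) fun k => ?_
  refine lp.norm_le_of_forall_sum_norm_le _ fun s => ?_
  have hcoord : ∀ l, ‖((1 - g ∘L f) (lp.single 1 k 1) : ℓ1) l‖
      = if l = k then 0 else |e l (u k)| := fun l => by
    by_cases hl : l = k
    · subst hl; simp [hf_single, hg, hdiag]
    · simp [hf_single, hg, lp.single_apply, hl]
  calc ∑ l ∈ s, ‖((1 - g ∘L f) (lp.single 1 k 1) : ℓ1) l‖
      = ∑ l ∈ s.erase k, |e l (u k)| := by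
        rw [Finset.sum_congr rfl fun l _ => hcoord l,
          ← Finset.sum_erase s (f := fun l => if l = k then 0 else |e l (u k)|) (if_pos rfl)]
        exact Finset.sum_congr rfl fun l hl => if_neg (Finset.ne_of_mem_erase hl)
    _ ≤ θ := hoff k _ (Finset.notMem_erase k s)

theorem containsComplementedL1_of_diag_dominant {E : Type*} [NormedAddCommGroup E]
    [NormedSpace ℝ E] [CompleteSpace E] (e : ℕ → E →L[ℝ] ℝ) (u : ℕ → E) {B C d θ : ℝ}
    (hu : ∀ k, ‖u k‖ ≤ B) (he : ∀ z (s : Finset ℕ), ∑ k ∈ s, |e k z| ≤ C * ‖z‖) (hd : 0 < d)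
    (hdiag : ∀ k, d ≤ e k (u k)) (hθ : θ < 1)
    (hoff : ∀ k (s : Finset ℕ), k ∉ s → ∑ l ∈ s, |e l (u k)| ≤ θ * d) :
    ContainsComplementedL1 E := by
  have hpos : ∀ k, 0 < e k (u k) := fun k => hd.trans_le (hdiag k)
  have hinv : ∀ k, (e k (u k))⁻¹ ≤ d⁻¹ := fun k => inv_anti₀ hd (hdiag k)
  refine containsComplementedL1_of_biorthogonal e (fun k => (e k (u k))⁻¹ • u k)
    (B := d⁻¹ * B) (fun k => ?_) he (fun k => ?_) hθ (fun k s hk => ?_)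
  · rw [norm_smul, Real.norm_of_nonneg (inv_nonneg.2 (hpos k).le)]
    exact mul_le_mul (hinv k) (hu k) (norm_nonneg _) (inv_nonneg.2 hd.le)
  · simp [(hpos k).ne']
  · calc ∑ l ∈ s, |e l ((e k (u k))⁻¹ • u k)| = (e k (u k))⁻¹ * ∑ l ∈ s, |e l (u k)| := by
          simp [abs_mul, abs_of_pos (hpos k), Finset.mul_sum]
      _ ≤ d⁻¹ * (θ * d) := mul_le_mul (hinv k) (hoff k s hk)
          (Finset.sum_nonneg fun _ _ => abs_nonneg _) (inv_nonneg.2 hd.le)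
      _ = θ := by field_simp

theorem exists_blocks_of_forall_exists_le_norm_sum {Z : Type*} [NormedAddCommGroup Z]
    [NormedSpace ℝ Z] (h : ℕ → Z →L[ℝ] ℝ) (hh : ∀ z, Summable fun n => h n z) {ε δ : ℝ}
    (hε : 0 < ε) (hδ : 0 < δ)
    (hbig : ∀ s : Finset ℕ, ∃ t, Disjoint t s ∧ ε ≤ ‖∑ n ∈ t, h n‖) :
    ∃ (J : ℕ → Finset ℕ) (z : ℕ → Z), (Pairwise fun i j => Disjoint (J i) (J j)) ∧
      (∀ k, ‖z k‖ ≤ 1 ∧ ε / 2 < (∑ n ∈ J k, h n) (z k)) ∧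
      ∀ m k, m < k → |(∑ n ∈ J k, h n) (z m)| < δ * (1 / 2) ^ k := by
  classical
  obtain ⟨Jz, hP, hR⟩ := exists_seq_of_forall_finset_exists_nat (β := Finset ℕ × Z)
    (fun _ y => ‖y.2‖ ≤ 1 ∧ ε / 2 < (∑ n ∈ y.1, h n) y.2)
    (fun k x y => Disjoint x.1 y.1 ∧ |(∑ n ∈ y.1, h n) x.2| < δ * (1 / 2) ^ k) fun k s => by
      have htail : ∀ x : Finset ℕ × Z, ∃ T : Finset ℕ, ∀ t, Disjoint t T →
          ‖∑ n ∈ t, h n x.2‖ < δ * (1 / 2) ^ k := fun x =>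
        summable_iff_vanishing_norm.1 (hh x.2) _ (by positivity)
      choose T hT using htail
      obtain ⟨t, hdisj, ht⟩ := hbig (s.biUnion fun x => x.1 ∪ T x)
      obtain ⟨z, hz, hzt⟩ :=
        (∑ n ∈ t, h n).exists_norm_le_one_lt_apply (r := ε / 2) (by linarith)
      have hsub : ∀ x ∈ s, x.1 ∪ T x ⊆ s.biUnion fun x => x.1 ∪ T x :=
        fun x hx => Finset.subset_biUnion_of_mem (fun x => x.1 ∪ T x) hx
      refine ⟨(t, z), ⟨hz, hzt⟩, fun x hx => ⟨?_, ?_⟩⟩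
      · exact (hdisj.mono_right (Finset.subset_union_left.trans (hsub x hx))).symm
      · rw [sum_apply, ← Real.norm_eq_abs]
        exact hT x t (hdisj.mono_right (Finset.subset_union_right.trans (hsub x hx)))
  refine ⟨fun k => (Jz k).1, fun k => (Jz k).2, fun i j hij => ?_, hP,
    fun m k hmk => (hR m k hmk).2⟩
  exact hij.lt_or_gt.elim (fun h => (hR i j h).1) fun h => (hR j i h).1.symm

theorem sum_abs_apply_sum_le_of_pairwise_disjoint {E : Type*} [SeminormedAddCommGroup E]
    [NormedSpace ℝ E] (h : ℕ → E →L[ℝ] ℝ) {K : ℝ} (hK : ∀ s : Finset ℕ, ‖∑ n ∈ s, h n‖ ≤ K)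
    {J : ℕ → Finset ℕ} (hJ : Pairwise fun i j => Disjoint (J i) (J j)) (w : E) (s : Finset ℕ) :
    ∑ k ∈ s, |(∑ n ∈ J k, h n) w| ≤ 2 * K * ‖w‖ := by
  have hsub : ∀ t ⊆ s, |∑ k ∈ t, (∑ n ∈ J k, h n) w| ≤ K * ‖w‖ := fun t _ => by
    rw [← sum_apply, ← Finset.sum_biUnion fun i _ j _ hij => hJ hij]
    exact (ContinuousLinearMap.le_opNorm _ w).trans
      (mul_le_mul_of_nonneg_right (hK _) (norm_nonneg w))
  simpa [mul_assoc] using Finset.sum_abs_le_two_mul s _ hsub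

theorem summable_of_forall_summable_apply {Z : Type*} [NormedAddCommGroup Z] [NormedSpace ℝ Z]
    [CompleteSpace Z] (hZ : ¬ ContainsComplementedL1 Z) (h : ℕ → Z →L[ℝ] ℝ)
    (hh : ∀ z, Summable fun n => h n z) : Summable h := by
  by_contra hns
  obtain ⟨K, hK⟩ := exists_norm_finset_sum_le_of_summable_apply h hh
  obtain ⟨ε, hε, hbig⟩ : ∃ ε > 0, ∀ s : Finset ℕ, ∃ t, Disjoint t s ∧ ε ≤ ‖∑ n ∈ t, h n‖ := by
    simpa [summable_iff_vanishing_norm] using hns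
  obtain ⟨J, z, hJ, hz, hlater⟩ :=
    exists_blocks_of_forall_exists_le_norm_sum h hh hε (δ := ε / 32) (by positivity) hbig
  have hbound : ∀ l i, |(∑ n ∈ J l, h n) (z i)| ≤ K := fun l i =>
    ((∑ n ∈ J l, h n).le_opNorm (z i)).trans <| by
      simpa using mul_le_mul (hK (J l)) (hz i).1 (norm_nonneg _) ((norm_nonneg _).trans (hK ∅))
  obtain ⟨p, q, hpq, hpairs⟩ := exists_pairs_forall_lt_abs_sub_lt _ hbound
    (η := fun k => ε / 16 / (k + 1)) fun k => by positivity
  have hq : StrictMono q := fun m k hmk => (hpairs m k hmk).1.trans (hpq k)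
  -- Diagonal entries exceed `ε / 2 - ε / 32 ≥ ε / 4`. Off the diagonal, the rows `l < k` of a
  -- column contribute at most `ε / 16` by the choice of the pairs, and the rows `l > k` at most
  -- `ε / 8` by the geometric decay of the blocks: in total `(3 / 4) * (ε / 4)`.
  refine hZ <| containsComplementedL1_of_diag_dominant (fun k => ∑ n ∈ J (q k), h n)
    (fun k => z (q k) - z (p k)) (B := 2) (C := 2 * K) (d := ε / 4) (θ := 3 / 4)
    (fun k => ?_) (fun w s => ?_) (by positivity) (fun k => ?_) (by norm_num) (fun k s hk => ?_)
  · linarith [norm_sub_le (z (q k)) (z (p k)), (hz (q k)).1, (hz (p k)).1]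
  · exact sum_abs_apply_sum_le_of_pairwise_disjoint h hK (hJ.comp_of_injective hq.injective) w s
  · show ε / 4 ≤ (∑ n ∈ J (q k), h n) (z (q k) - z (p k))
    have hsmall : |(∑ n ∈ J (q k), h n) (z (p k))| < ε / 32 :=
      (hlater _ _ (hpq k)).trans_le
        (mul_le_of_le_one_right (by positivity) (pow_le_one₀ (by norm_num) (by norm_num)))
    rw [map_sub]
    linarith [(abs_lt.1 hsmall).2, (hz (q k)).2]
  · refine (sum_le_three_mul_of_le_div_of_le_geometric hk
      (fun l => |(∑ n ∈ J (q l), h n) (z (q k) - z (p k))|) (c := ε / 16) (by positivity)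
      (fun l hl => by simpa [map_sub] using (hpairs l k hl).2.le) (fun l hl => ?_)).trans_eq
      (by ring)
    have hqkl : q k < q l := hq hl
    have hqk_small := hlater (q k) (q l) hqkl
    have hpk_small := hlater (p k) (q l) ((hpq k).trans hqkl)
    have hpow : ε / 16 * (1 / 2 : ℝ) ^ q l ≤ ε / 16 * (1 / 2) ^ l :=
      mul_le_mul_of_nonneg_left (pow_le_pow_of_le_one (by norm_num) (by norm_num) (hq.id_le l))
        (by positivity)
    calc |(∑ n ∈ J (q l), h n) (z (q k) - z (p k))|
        ≤ |(∑ n ∈ J (q l), h n) (z (q k))| + |(∑ n ∈ J (q l), h n) (z (p k))| := by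
          rw [map_sub]; exact abs_sub _ _
      _ ≤ ε / 16 * (1 / 2) ^ l := by linarith

namespace IsProjTensorProduct

variable {X Y Z : Type*} [NormedAddCommGroup X] [NormedSpace ℝ X] [NormedAddCommGroup Y]
  [NormedSpace ℝ Y] [NormedAddCommGroup Z] [NormedSpace ℝ Z] {m : X →L[ℝ] Y →L[ℝ] Z}

theorem continuousLinearMap_ext (hm : IsProjTensorProduct X Y Z m) {W : Type*}
    [NormedAddCommGroup W] [NormedSpace ℝ W] {D D' : Z →L[ℝ] W}
    (h : ∀ x y, D (m x y) = D' (m x y)) : D = D' :=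
  ContinuousLinearMap.ext_on hm.dense_span <| by rintro _ ⟨x, y, rfl⟩; exact h x y

noncomputable def dualEquiv (hm : IsProjTensorProduct X Y Z m) (W : Type) [NormedAddCommGroup W]
    [NormedSpace ℝ W] [CompleteSpace W] :
    (Z →L[ℝ] W) ≃ₗᵢ[ℝ] (X →L[ℝ] Y →L[ℝ] W) :=
  let Φ : (Z →L[ℝ] W) →ₗ[ℝ] (X →L[ℝ] Y →L[ℝ] W) :=
    { toFun := fun D => ContinuousLinearMap.compL ℝ Y Z W D ∘L m
      map_add' := fun D D' => by ext; simp
      map_smul' := fun c D => by ext; simp }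
  have hΦ : ∀ D x y, Φ D x y = D (m x y) := fun _ _ _ => rfl
  .ofSurjective
    { Φ with
      norm_map' := fun D => by
        obtain ⟨D', hnorm, hD'⟩ := hm.lift W (Φ D)
        rw [← hnorm, hm.continuousLinearMap_ext fun x y => (hD' x y).trans (hΦ D x y)] }
    fun B => by
      obtain ⟨D, -, hD⟩ := hm.lift W B
      exact ⟨D, by ext x y; exact hD x y⟩

theorem dualEquiv_apply_apply (hm : IsProjTensorProduct X Y Z m) (W : Type)
    [NormedAddCommGroup W] [NormedSpace ℝ W] [CompleteSpace W] (D : Z →L[ℝ] W) (x : X) (y : Y) :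
    hm.dualEquiv W D x y = D (m x y) :=
  rfl

end IsProjTensorProduct

theorem stmt19_general {X Y Z : Type*} [NormedAddCommGroup X] [NormedSpace ℝ X] [CompleteSpace X] [NormedAddCommGroup Y] [NormedSpace ℝ Y] [NormedAddCommGroup Z] [NormedSpace ℝ Z] [CompleteSpace Z]
    (m : X →L[ℝ] Y →L[ℝ] Z) (hm : IsProjTensorProduct X Y Z m)
    (P : ℕ → X →L[ℝ] X) (hP : ∀ v : X, HasSum (fun n => P n v) v)
    (hZ : ¬ ContainsComplementedL1 Z) :
    ∀ T : X →L[ℝ] (Y →L[ℝ] ℝ), HasSum (fun n => T.comp (P n)) T := by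
  intro T
  obtain ⟨M, hM⟩ := exists_norm_finset_sum_le_of_summable_apply P fun v => (hP v).summable
  let h : ℕ → Z →L[ℝ] ℝ := fun n => (hm.dualEquiv ℝ).symm (T ∘L P n)
  have h_apply : ∀ n x y, h n (m x y) = T (P n x) y := fun n x y => by
    rw [← hm.dualEquiv_apply_apply]; simp [h]
  have hK : ∀ s : Finset ℕ, ‖∑ n ∈ s, h n‖ ≤ ‖T‖ * M := fun s => by
    have hsum : ∑ n ∈ s, h n = (hm.dualEquiv ℝ).symm (T ∘L ∑ n ∈ s, P n) := by
      rw [ContinuousLinearMap.comp_finsetSum]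
      exact (map_sum (hm.dualEquiv ℝ).symm.toLinearEquiv _ _).symm
    rw [hsum, LinearIsometryEquiv.norm_map]
    exact (T.opNorm_comp_le _).trans (mul_le_mul_of_nonneg_left (hM s) (norm_nonneg T))
  have hweak : ∀ z, Summable fun n => h n z :=
    summable_apply_of_dense_span h hK hm.dense_span <| by
      rintro _ ⟨x, y, rfl⟩
      simpa [h_apply] using ((hP x).mapL ((ContinuousLinearMap.apply ℝ ℝ y).comp T)).summable
  obtain ⟨L, hL⟩ : Summable fun n => T ∘L P n := by
    simpa [h] using (summable_of_forall_summable_apply hZ h hweak).mapL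
      (hm.dualEquiv ℝ).toContinuousLinearEquiv.toContinuousLinearMap
  convert hL
  ext x : 1
  exact ((hP x).mapL T).unique (hL.mapL (ContinuousLinearMap.apply ℝ _ x))

theorem stmt19 {X Y Z : Type*} [NormedAddCommGroup X] [NormedSpace ℝ X] [CompleteSpace X] [NormedAddCommGroup Y] [NormedSpace ℝ Y] [CompleteSpace Y] [NormedAddCommGroup Z] [NormedSpace ℝ Z] [CompleteSpace Z]
    (m : X →L[ℝ] Y →L[ℝ] Z) (hm : IsProjTensorProduct X Y Z m)
    (P : ℕ → X →L[ℝ] X) (hP : ∀ v : X, HasSum (fun n => P n v) v)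
    (hZ : ¬ ContainsComplementedL1 Z) :
    ∀ T : X →L[ℝ] (Y →L[ℝ] ℝ), HasSum (fun n => T.comp (P n)) T :=
  stmt19_general m hm P hP hZ
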